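/- Let σ² be the variance of a square-integrable function f on a product probability space, and let S̄₁,…,S̄_d denote the first-order upper Sobol' indices, S̄ᵢ = (1/(2σ²)) ∫ (f(v_i : z_{−i}) − f(z))² dF(z) dFᵢ(vᵢ). Then σ² ≤ σ² Σ_{i=1}^d S̄ᵢ, i.e., the sum of the upper Sobol' indices is at least 1. -/

import Mathlib

/-!
This is the Efron–Stein inequality. Let `E_s f` (`coordCondExp μ s f`) be the conditional
expectation of `f` given the coordinates in `s`, obtained by integrating out the other
coordinates. Revealing the coordinates one at a time, the increments `E_{insert i s} f - E_s f`
are orthogonal, so `Var f` is the sum of their squared norms. Integrating out coordinate sets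
commutes, so `E_{insert i s} (E_{univ \ {i}} f) = E_s f` and each increment equals
`E_{insert i s} (f - E_{univ \ {i}} f)`. Its squared norm is therefore at most
`‖f - E_{univ \ {i}} f‖² = E[Var(f | x₋ᵢ)]`, which is half the `i`-th Sobol' numerator.
-/

open MeasureTheory ProbabilityTheory Finset Function

namespace MeasureTheory

section

variable {Ω : Type*} [MeasurableSpace Ω] {μ : Measure Ω}

lemma sq_integral_le_integral_sq [IsProbabilityMeasure μ] {g : Ω → ℝ} (hg : MemLp g 2 μ) :
    (∫ x, g x ∂μ) ^ 2 ≤ ∫ x, g x ^ 2 ∂μ := by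
  have h := variance_nonneg g μ
  rw [variance_eq_sub hg] at h
  simpa only [sub_nonneg, Pi.pow_apply] using h

lemma integral_sub_sq {a b : Ω → ℝ} (ha : MemLp a 2 μ) (hb : MemLp b 2 μ) :
    ∫ x, (a x - b x) ^ 2 ∂μ
      = ∫ x, a x ^ 2 ∂μ - 2 * ∫ x, a x * b x ∂μ + ∫ x, b x ^ 2 ∂μ := by
  have hab : Integrable (fun x => 2 * (a x * b x)) μ := (ha.integrable_mul hb).const_mul 2
  calc ∫ x, (a x - b x) ^ 2 ∂μ = ∫ x, (a x ^ 2 - 2 * (a x * b x) + b x ^ 2) ∂μ := by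
        congr with x; ring
    _ = _ := by
        have hdiff : Integrable (fun x => a x ^ 2 - 2 * (a x * b x)) μ :=
          ha.integrable_sq.sub hab
        rw [integral_add hdiff hb.integrable_sq,
          integral_sub ha.integrable_sq hab, integral_const_mul]

lemma MeasurePreserving.integral_comp_of_aestronglyMeasurable {Ω' : Type*} [MeasurableSpace Ω']
    {ν : Measure Ω'} {f : Ω → Ω'} (hf : MeasurePreserving f μ ν) {g : Ω' → ℝ}
    (hg : AEStronglyMeasurable g ν) : ∫ x, g (f x) ∂μ = ∫ y, g y ∂ν := by
  rw [← hf.map_eq] at hg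
  rw [← integral_map hf.measurable.aemeasurable hg, hf.map_eq]

end

variable {ι : Type*} [DecidableEq ι] {X : ι → Type*} [∀ i, MeasurableSpace (X i)]

lemma measurable_piecewise_prod (s : Finset ι) :
    Measurable fun p : (∀ i, X i) × (∀ i, X i) => s.piecewise p.1 p.2 := by
  refine measurable_pi_lambda _ fun j => ?_
  by_cases hj : j ∈ s
  · simp only [piecewise_eq_of_mem _ _ _ hj]
    fun_prop
  · simp only [piecewise_eq_of_notMem _ _ _ hj]
    fun_prop

variable [Fintype ι] (μ : ∀ i, Measure (X i))

/-- The conditional expectation of `g` given the coordinates in `s`. -/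
noncomputable def coordCondExp (s : Finset ι) (g : (∀ i, X i) → ℝ) (x : ∀ i, X i) : ℝ :=
  ∫ y, g (s.piecewise x y) ∂Measure.pi μ

variable {μ} {s t : Finset ι} {g φ : (∀ i, X i) → ℝ}

lemma coordCondExp_empty : coordCondExp μ ∅ g = fun _ => ∫ x, g x ∂Measure.pi μ := by
  ext x
  simp [coordCondExp]

lemma coordCondExp_piecewise_of_subset (hst : s ⊆ t) (x y : ∀ i, X i) :
    coordCondExp μ s g (t.piecewise x y) = coordCondExp μ s g x := by
  simp only [coordCondExp, piecewise_piecewise_of_subset_left hst]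

variable [∀ i, IsProbabilityMeasure (μ i)]

variable (μ) in
lemma measurePreserving_piecewise (s : Finset ι) :
    MeasurePreserving (fun p : (∀ i, X i) × (∀ i, X i) => s.piecewise p.1 p.2)
      ((Measure.pi μ).prod (Measure.pi μ)) (Measure.pi μ) := by
  refine ⟨measurable_piecewise_prod s, (Measure.pi_eq fun A hA => ?_).symm⟩
  have hpre : (fun p : (∀ i, X i) × (∀ i, X i) => s.piecewise p.1 p.2) ⁻¹' Set.univ.pi A
      = Set.univ.pi (s.piecewise A fun _ => Set.univ) ×ˢ
          Set.univ.pi (s.piecewise (fun _ => Set.univ) A) := by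
    ext p
    simp only [Set.mem_preimage, Set.mem_pi, Set.mem_univ, true_implies, Set.mem_prod,
      ← forall_and]
    refine forall_congr' fun j => ?_
    by_cases hj : j ∈ s <;> simp [hj]
  rw [Measure.map_apply (measurable_piecewise_prod s) (.univ_pi hA), hpre, Measure.prod_prod,
    Measure.pi_pi, Measure.pi_pi, ← prod_mul_distrib]
  refine prod_congr rfl fun j _ => ?_
  by_cases hj : j ∈ s <;> simp [hj]

variable (μ) in
lemma measurePreserving_update (i : ι) :
    MeasurePreserving (fun p : (∀ i, X i) × X i => update p.1 i p.2)
      ((Measure.pi μ).prod (μ i)) (Measure.pi μ) := by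
  have hψ : MeasurePreserving (Prod.map id (eval i)) ((Measure.pi μ).prod (Measure.pi μ))
      ((Measure.pi μ).prod (μ i)) :=
    (MeasurePreserving.id _).prod (measurePreserving_eval μ i)
  refine ⟨measurable_update', ?_⟩
  rw [← hψ.map_eq, Measure.map_map measurable_update' hψ.measurable]
  convert (measurePreserving_piecewise μ (univ.erase i)).map_eq using 2
  ext p : 1
  simp

lemma integral_comp_piecewise (hg : AEStronglyMeasurable g (Measure.pi μ)) :
    ∫ p, g (s.piecewise p.1 p.2) ∂(Measure.pi μ).prod (Measure.pi μ) = ∫ x, g x ∂Measure.pi μ :=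
  (measurePreserving_piecewise μ s).integral_comp_of_aestronglyMeasurable hg

lemma coordCondExp_univ : coordCondExp μ univ g = g := by
  ext x
  simp [coordCondExp]

lemma aestronglyMeasurable_coordCondExp (hg : AEStronglyMeasurable g (Measure.pi μ)) :
    AEStronglyMeasurable (coordCondExp μ s g) (Measure.pi μ) :=
  (hg.comp_measurePreserving (measurePreserving_piecewise μ s)).integral_prod_right'

lemma integrable_coordCondExp (hg : Integrable g (Measure.pi μ)) :
    Integrable (coordCondExp μ s g) (Measure.pi μ) :=
  ((measurePreserving_piecewise μ s).integrable_comp_of_integrable hg).integral_prod_left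

lemma integral_coordCondExp (hg : Integrable g (Measure.pi μ)) :
    ∫ x, coordCondExp μ s g x ∂Measure.pi μ = ∫ x, g x ∂Measure.pi μ :=
  (integral_integral (f := fun x y => g (s.piecewise x y))
    ((measurePreserving_piecewise μ s).integrable_comp_of_integrable hg)).trans
    (integral_comp_piecewise hg.aestronglyMeasurable)

lemma ae_memLp_piecewise (hg : MemLp g 2 (Measure.pi μ)) :
    ∀ᵐ x ∂Measure.pi μ, MemLp (fun y => g (s.piecewise x y)) 2 (Measure.pi μ) := by
  have h := hg.comp_measurePreserving (measurePreserving_piecewise μ s)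
  filter_upwards [h.aestronglyMeasurable.prodMk_left, h.integrable_sq.prod_right_ae]
    with x hmeas hsq
  exact (memLp_two_iff_integrable_sq hmeas).2 hsq

lemma ae_sq_coordCondExp_le (hg : MemLp g 2 (Measure.pi μ)) :
    ∀ᵐ x ∂Measure.pi μ, coordCondExp μ s g x ^ 2 ≤ coordCondExp μ s (fun y => g y ^ 2) x := by
  filter_upwards [ae_memLp_piecewise hg] with x hx
  exact sq_integral_le_integral_sq hx

lemma memLp_coordCondExp (hg : MemLp g 2 (Measure.pi μ)) :
    MemLp (coordCondExp μ s g) 2 (Measure.pi μ) := by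
  have hmeas := aestronglyMeasurable_coordCondExp (s := s) hg.aestronglyMeasurable
  refine (memLp_two_iff_integrable_sq hmeas).2 <|
    (integrable_coordCondExp (s := s) hg.integrable_sq).mono' (hmeas.pow 2) ?_
  filter_upwards [ae_sq_coordCondExp_le hg] with x hx
  rwa [Real.norm_of_nonneg (sq_nonneg _)]

lemma integral_sq_coordCondExp_le (hg : MemLp g 2 (Measure.pi μ)) :
    ∫ x, coordCondExp μ s g x ^ 2 ∂Measure.pi μ ≤ ∫ x, g x ^ 2 ∂Measure.pi μ :=
  (integral_mono_ae (memLp_coordCondExp hg).integrable_sq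
    (integrable_coordCondExp hg.integrable_sq) (ae_sq_coordCondExp_le hg)).trans_eq
    (integral_coordCondExp hg.integrable_sq)

lemma integral_coordCondExp_mul_eq_integral_prod (hg : MemLp g 2 (Measure.pi μ))
    (hφ : MemLp φ 2 (Measure.pi μ)) :
    ∫ x, coordCondExp μ s g x * φ x ∂Measure.pi μ
      = ∫ p, g (s.piecewise p.1 p.2) * φ p.1 ∂(Measure.pi μ).prod (Measure.pi μ) := by
  have hprod := (hg.comp_measurePreserving (measurePreserving_piecewise μ s)).integrable_mul
    (hφ.comp_measurePreserving measurePreserving_fst)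
  simp_rw [coordCondExp, ← integral_mul_const]
  exact integral_integral (f := fun x y => g (s.piecewise x y) * φ x) hprod

lemma integral_coordCondExp_mul (hg : MemLp g 2 (Measure.pi μ)) (hφ : MemLp φ 2 (Measure.pi μ))
    (hφs : ∀ x y, φ (s.piecewise x y) = φ x) :
    ∫ x, coordCondExp μ s g x * φ x ∂Measure.pi μ = ∫ x, g x * φ x ∂Measure.pi μ := by
  rw [integral_coordCondExp_mul_eq_integral_prod hg hφ,
    ← integral_comp_piecewise (s := s) (g := fun x => g x * φ x)
      (hg.aestronglyMeasurable.mul hφ.aestronglyMeasurable)]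
  simp only [hφs]

lemma integral_mul_coordCondExp (hg : MemLp g 2 (Measure.pi μ)) :
    ∫ x, g x * coordCondExp μ s g x ∂Measure.pi μ
      = ∫ x, coordCondExp μ s g x ^ 2 ∂Measure.pi μ := by
  rw [← integral_coordCondExp_mul hg (memLp_coordCondExp hg)
    (coordCondExp_piecewise_of_subset subset_rfl)]
  simp_rw [sq]

lemma integral_coordCondExp_mul_coordCondExp (hst : s ⊆ t) (hg : MemLp g 2 (Measure.pi μ)) :
    ∫ x, coordCondExp μ t g x * coordCondExp μ s g x ∂Measure.pi μ
      = ∫ x, coordCondExp μ s g x ^ 2 ∂Measure.pi μ := by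
  rw [integral_coordCondExp_mul hg (memLp_coordCondExp hg)
    (coordCondExp_piecewise_of_subset hst), integral_mul_coordCondExp hg]

lemma coordCondExp_coordCondExp (hg : Integrable g (Measure.pi μ)) :
    coordCondExp μ s (coordCondExp μ t g) =ᵐ[Measure.pi μ] coordCondExp μ (s ∩ t) g := by
  filter_upwards [((measurePreserving_piecewise μ (s ∩ t)).integrable_comp_of_integrable
    hg).prod_right_ae] with x hx
  have hpw : ∀ y u : ∀ i, X i,
      t.piecewise (s.piecewise x y) u = (s ∩ t).piecewise x (t.piecewise y u) := by
    intro y u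
    ext j
    by_cases hs : j ∈ s <;> by_cases ht : j ∈ t <;> simp [hs, ht]
  calc coordCondExp μ s (coordCondExp μ t g) x
      = ∫ y, ∫ u, g ((s ∩ t).piecewise x (t.piecewise y u)) ∂Measure.pi μ ∂Measure.pi μ := by
        simp only [coordCondExp, hpw]
    _ = ∫ p, g ((s ∩ t).piecewise x (t.piecewise p.1 p.2))
          ∂(Measure.pi μ).prod (Measure.pi μ) :=
        integral_integral (f := fun y u => g ((s ∩ t).piecewise x (t.piecewise y u)))
          ((measurePreserving_piecewise μ t).integrable_comp_of_integrable hx)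
    _ = coordCondExp μ (s ∩ t) g x := integral_comp_piecewise hx.aestronglyMeasurable

lemma coordCondExp_sub {h : (∀ i, X i) → ℝ} (hg : Integrable g (Measure.pi μ))
    (hh : Integrable h (Measure.pi μ)) :
    coordCondExp μ s (fun x => g x - h x)
      =ᵐ[Measure.pi μ] fun x => coordCondExp μ s g x - coordCondExp μ s h x := by
  filter_upwards [((measurePreserving_piecewise μ s).integrable_comp_of_integrable
    hg).prod_right_ae, ((measurePreserving_piecewise μ s).integrable_comp_of_integrable
    hh).prod_right_ae] with x hgx hhx
  exact integral_sub hgx hhx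

lemma integral_prod_piecewise_sub_sq (hg : MemLp g 2 (Measure.pi μ)) :
    ∫ p, (g (s.piecewise p.1 p.2) - g p.1) ^ 2 ∂(Measure.pi μ).prod (Measure.pi μ)
      = 2 * (∫ x, g x ^ 2 ∂Measure.pi μ - ∫ x, coordCondExp μ s g x ^ 2 ∂Measure.pi μ) := by
  have hpw : MemLp (fun p : (∀ i, X i) × (∀ i, X i) => g (s.piecewise p.1 p.2)) 2
      ((Measure.pi μ).prod (Measure.pi μ)) :=
    hg.comp_measurePreserving (measurePreserving_piecewise μ s)
  have hmp_fst :
      MeasurePreserving Prod.fst ((Measure.pi μ).prod (Measure.pi μ)) (Measure.pi μ) :=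
    measurePreserving_fst
  have hfst : MemLp (fun p : (∀ i, X i) × (∀ i, X i) => g p.1) 2
      ((Measure.pi μ).prod (Measure.pi μ)) :=
    hg.comp_measurePreserving hmp_fst
  have hcross : ∫ p, g (s.piecewise p.1 p.2) * g p.1 ∂(Measure.pi μ).prod (Measure.pi μ)
      = ∫ x, coordCondExp μ s g x ^ 2 ∂Measure.pi μ := by
    rw [← integral_coordCondExp_mul_eq_integral_prod hg hg, ← integral_mul_coordCondExp hg]
    simp_rw [mul_comm]
  have hsq := hg.integrable_sq.aestronglyMeasurable
  rw [integral_sub_sq hpw hfst, hcross, integral_comp_piecewise (g := fun x => g x ^ 2) hsq,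
    hmp_fst.integral_comp_of_aestronglyMeasurable (g := fun x => g x ^ 2) hsq]
  ring

lemma integral_integral_update_sub_sq (hg : MemLp g 2 (Measure.pi μ)) (i : ι) :
    ∫ x, ∫ v, (g (update x i v) - g x) ^ 2 ∂μ i ∂Measure.pi μ
      = 2 * (∫ x, g x ^ 2 ∂Measure.pi μ
          - ∫ x, coordCondExp μ (univ.erase i) g x ^ 2 ∂Measure.pi μ) := by
  have hψ : MeasurePreserving (Prod.map id (eval i)) ((Measure.pi μ).prod (Measure.pi μ))
      ((Measure.pi μ).prod (μ i)) :=
    (MeasurePreserving.id _).prod (measurePreserving_eval μ i)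
  have hint : Integrable (fun p : (∀ i, X i) × X i => (g (update p.1 i p.2) - g p.1) ^ 2)
      ((Measure.pi μ).prod (μ i)) :=
    ((hg.comp_measurePreserving (measurePreserving_update μ i)).sub
      (hg.comp_measurePreserving measurePreserving_fst)).integrable_sq
  rw [integral_integral (f := fun x v => (g (update x i v) - g x) ^ 2) hint,
    ← hψ.integral_comp_of_aestronglyMeasurable hint.aestronglyMeasurable,
    ← integral_prod_piecewise_sub_sq hg]
  simp

lemma integral_sq_coordCondExp_insert_sub_le {i : ι} (hi : i ∉ s)
    (hg : MemLp g 2 (Measure.pi μ)) :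
    ∫ x, coordCondExp μ (insert i s) g x ^ 2 ∂Measure.pi μ
        - ∫ x, coordCondExp μ s g x ^ 2 ∂Measure.pi μ
      ≤ ∫ x, g x ^ 2 ∂Measure.pi μ
        - ∫ x, coordCondExp μ (univ.erase i) g x ^ 2 ∂Measure.pi μ := by
  set a := coordCondExp μ (insert i s) g
  set b := coordCondExp μ s g
  set G := coordCondExp μ (univ.erase i) g
  have hG : MemLp G 2 (Measure.pi μ) := memLp_coordCondExp hg
  have hab : ∫ x, a x ^ 2 ∂Measure.pi μ - ∫ x, b x ^ 2 ∂Measure.pi μ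
      = ∫ x, (a x - b x) ^ 2 ∂Measure.pi μ := by
    rw [integral_sub_sq (memLp_coordCondExp hg) (memLp_coordCondExp hg),
      integral_coordCondExp_mul_coordCondExp (subset_insert i s) hg]
    ring
  have hgG : ∫ x, (g x - G x) ^ 2 ∂Measure.pi μ
      = ∫ x, g x ^ 2 ∂Measure.pi μ - ∫ x, G x ^ 2 ∂Measure.pi μ := by
    rw [integral_sub_sq hg hG, integral_mul_coordCondExp hg]
    ring
  have hGb : coordCondExp μ (insert i s) G =ᵐ[Measure.pi μ] b := by
    have hinter : insert i s ∩ univ.erase i = s := by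
      ext j
      by_cases hj : j = i
      · simp [hj, hi]
      · simp [hj]
    simpa only [hinter] using coordCondExp_coordCondExp (s := insert i s) (t := univ.erase i)
      (hg.integrable one_le_two)
  have hdiff : (fun x => a x - b x)
      =ᵐ[Measure.pi μ] coordCondExp μ (insert i s) (fun x => g x - G x) := by
    filter_upwards [coordCondExp_sub (s := insert i s) (hg.integrable one_le_two)
      (hG.integrable one_le_two), hGb] with x hsub hGbx
    rw [hsub, hGbx]
  rw [hab, ← hgG]
  exact (integral_congr_ae (hdiff.fun_comp (· ^ 2))).trans_le
    (integral_sq_coordCondExp_le (hg.sub hG))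

end MeasureTheory

namespace ProbabilityTheory

variable {ι : Type*} [Fintype ι] [DecidableEq ι] {X : ι → Type*} [∀ i, MeasurableSpace (X i)]
  {μ : ∀ i, Measure (X i)} [∀ i, IsProbabilityMeasure (μ i)] {f : (∀ i, X i) → ℝ}

lemma variance_le_sum_integral_sq_sub_integral_sq_coordCondExp
    (hf : MemLp f 2 (Measure.pi μ)) :
    variance f (Measure.pi μ) ≤ ∑ i, (∫ x, f x ^ 2 ∂Measure.pi μ
      - ∫ x, coordCondExp μ (univ.erase i) f x ^ 2 ∂Measure.pi μ) := by
  have key : ∀ s : Finset ι, ∫ x, coordCondExp μ s f x ^ 2 ∂Measure.pi μ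
      - (∫ x, f x ∂Measure.pi μ) ^ 2 ≤ ∑ i ∈ s, (∫ x, f x ^ 2 ∂Measure.pi μ
        - ∫ x, coordCondExp μ (univ.erase i) f x ^ 2 ∂Measure.pi μ) := by
    intro s
    induction s using Finset.induction_on with
    | empty => simp [coordCondExp_empty]
    | insert i s hi ih =>
      rw [sum_insert hi]
      linarith [integral_sq_coordCondExp_insert_sub_le hi hf]
  simpa [variance_eq_sub hf, coordCondExp_univ] using key univ

/-- The Efron–Stein inequality. -/
theorem variance_le_sum_integral_update_sub_sq (hf : MemLp f 2 (Measure.pi μ)) :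
    variance f (Measure.pi μ)
      ≤ ∑ i, (1 / 2) * ∫ x, ∫ v, (f (update x i v) - f x) ^ 2 ∂μ i ∂Measure.pi μ := by
  simp_rw [integral_integral_update_sub_sq hf]
  simpa using variance_le_sum_integral_sq_sub_integral_sq_coordCondExp hf

end ProbabilityTheory

/-- Let `σ²` be the variance of a square-integrable function `f` on a product probability space,
and let `S̄ᵢ = (1/(2σ²)) ∫∫ (f(vᵢ:z₋ᵢ) − f(z))² dF(z) dFᵢ(vᵢ)` be the first-order upper Sobol'
indices.  Then `σ² ≤ σ² ∑ᵢ S̄ᵢ`, i.e. the sum of the upper Sobol' indices is at least `1`. -/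
theorem stmt7 {d : ℕ} (F : Fin d → Measure ℝ) [∀ i, IsProbabilityMeasure (F i)]
    (f : (Fin d → ℝ) → ℝ) (hf : MemLp f 2 (Measure.pi F))
    (σ2 : ℝ)
    (hσ2 : σ2 = ∫ z, (f z - ∫ w, f w ∂(Measure.pi F)) ^ 2 ∂(Measure.pi F))
    (hσpos : 0 < σ2)
    (Sbar : Fin d → ℝ)
    (hSbar : ∀ i, Sbar i = (1 / (2 * σ2)) *
      ∫ z, ∫ v, (f (Function.update z i v) - f z) ^ 2 ∂(F i) ∂(Measure.pi F)) :
    σ2 ≤ σ2 * ∑ i, Sbar i ∧ 1 ≤ ∑ i, Sbar i := by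
  have hvar : σ2 = variance f (Measure.pi F) := by
    rw [hσ2, variance_eq_integral hf.aemeasurable]
  have hsum : σ2 * ∑ i, Sbar i
      = ∑ i, (1 / 2) * ∫ z, ∫ v, (f (update z i v) - f z) ^ 2 ∂(F i) ∂(Measure.pi F) := by
    rw [mul_sum]
    refine sum_congr rfl fun i _ => ?_
    rw [hSbar i]
    field_simp
  have hle : σ2 ≤ σ2 * ∑ i, Sbar i := by
    rw [hsum, hvar]
    exact variance_le_sum_integral_update_sub_sq hf
  exact ⟨hle, le_of_mul_le_mul_left (by rwa [mul_one]) hσpos⟩
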